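/- With the setup of the red-green map: for vectors x, y with 0 ≤ xᵢ ≤ mᵢ, 0 ≤ yᵢ ≤ mᵢ, not both zero, and h(x), h(y) the first index n such that rₙ lands in x_green, y_green respectively (rₙ i.i.d. Uniform([0, M_D])), we have P(h(x) = h(y)) = (∑ i min(xᵢ, yᵢ)) / (∑ i max(xᵢ, yᵢ)), i.e., the generalized Jaccard similarity. -/

import Mathlib

/-!
Let `A` and `B` be the two green regions and `ν` the common law of the draws. The first draw that
lands in `A ∪ B` is distributed as `ν` conditioned on `A ∪ B`, and the two hitting times agree
exactly when that draw lands in `A ∩ B`; summing the geometric series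
`∑ₙ ν((A ∪ B)ᶜ)ⁿ ν(A ∩ B)` gives `ν(A ∩ B) / ν(A ∪ B)`.
The green intervals of a vector `z` are pairwise almost disjoint, so its green region has length
`∑ zᵢ`. The union of the regions of `x` and `y` is the region of `max x y`, and by
inclusion–exclusion their intersection has length `∑ min(xᵢ, yᵢ)`.
-/

open MeasureTheory Set
open scoped ProbabilityTheory

lemma Set.Icc_union_Icc_left_eq {α : Type*} [LinearOrder α] (a b c : α) :
    Icc a b ∪ Icc a c = Icc a (max b c) := by
  ext t
  simp only [mem_union, mem_Icc, le_max_iff]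
  tauto

section GreenSet

variable {D : ℕ} (M : Fin (D + 1) → ℝ)

def greenSet (z : Fin D → ℝ) : Set ℝ :=
  ⋃ i : Fin D, Icc (M i.castSucc) (M i.castSucc + z i)

lemma measurableSet_greenSet (z : Fin D → ℝ) : MeasurableSet (greenSet M z) :=
  .iUnion fun _ => measurableSet_Icc

lemma greenSet_union (x y : Fin D → ℝ) :
    greenSet M x ∪ greenSet M y = greenSet M fun i => max (x i) (y i) := by
  simp only [greenSet, ← iUnion_union_distrib, Icc_union_Icc_left_eq, max_add_add_left]

variable {M} {z : Fin D → ℝ} (hz0 : ∀ i, 0 ≤ z i) (hzM : ∀ i, M i.castSucc + z i ≤ M i.succ)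
include hz0 hzM

lemma monotone_of_castSucc_add_le : Monotone M :=
  Fin.monotone_iff_le_succ.2 fun i => (le_add_of_nonneg_right (hz0 i)).trans (hzM i)

lemma greenSet_subset_Icc : greenSet M z ⊆ Icc (M 0) (M (Fin.last D)) := by
  have hM := monotone_of_castSucc_add_le hz0 hzM
  exact iUnion_subset fun i =>
    Icc_subset_Icc (hM (Fin.zero_le _)) ((hzM i).trans (hM (Fin.le_last _)))

lemma volume_greenSet : volume (greenSet M z) = ENNReal.ofReal (∑ i, z i) := by
  have hM := monotone_of_castSucc_add_le hz0 hzM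
  have hnull : ∀ i j : Fin D, i < j →
      AEDisjoint volume (Icc (M i.castSucc) (M i.castSucc + z i))
        (Icc (M j.castSucc) (M j.castSucc + z j)) := by
    intro i j hij
    have hle : M i.castSucc + z i ≤ M j.castSucc :=
      (hzM i).trans (hM (Fin.succ_le_castSucc_iff.2 hij))
    refine measure_mono_null (t := Icc (M j.castSucc) (M i.castSucc + z i))
      (fun _ ht => ⟨ht.2.1, ht.1.2⟩) ?_
    rw [Real.volume_Icc, ENNReal.ofReal_eq_zero, sub_nonpos]
    exact hle
  rw [greenSet, measure_iUnion₀ (fun i j hij => ?_) fun i => measurableSet_Icc.nullMeasurableSet,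
    tsum_fintype, ENNReal.ofReal_sum_of_nonneg fun i _ => hz0 i]
  · simp only [Real.volume_Icc, add_sub_cancel_left]
  · rcases hij.lt_or_gt with h | h
    · exact hnull i j h
    · exact (hnull j i h).symm

omit hz0 hzM

variable {x y : Fin D → ℝ} (hx0 : ∀ i, 0 ≤ x i) (hxM : ∀ i, M i.castSucc + x i ≤ M i.succ)
  (hyM : ∀ i, M i.castSucc + y i ≤ M i.succ)
include hx0 hxM hyM

lemma volume_greenSet_union :
    volume (greenSet M x ∪ greenSet M y) = ENNReal.ofReal (∑ i, max (x i) (y i)) := by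
  rw [greenSet_union]
  refine volume_greenSet (fun i => (hx0 i).trans (le_max_left _ _)) fun i => ?_
  rw [← max_add_add_left]
  exact max_le (hxM i) (hyM i)

lemma volume_greenSet_inter (hy0 : ∀ i, 0 ≤ y i) :
    volume (greenSet M x ∩ greenSet M y) = ENNReal.ofReal (∑ i, min (x i) (y i)) := by
  have hsum : ∑ i, x i + ∑ i, y i = ∑ i, max (x i) (y i) + ∑ i, min (x i) (y i) := by
    simp only [← Finset.sum_add_distrib, max_add_min]
  have h := measure_union_add_inter (μ := volume) (greenSet M x) (measurableSet_greenSet M y)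
  rw [volume_greenSet_union hx0 hxM hyM, volume_greenSet hx0 hxM, volume_greenSet hy0 hyM,
    ← ENNReal.ofReal_add (Finset.sum_nonneg fun i _ => hx0 i)
      (Finset.sum_nonneg fun i _ => hy0 i), hsum,
    ENNReal.ofReal_add (Finset.sum_nonneg fun i _ => (hx0 i).trans (le_max_left _ _))
      (Finset.sum_nonneg fun i _ => le_min (hx0 i) (hy0 i))] at h
  exact (ENNReal.add_right_inj ENNReal.ofReal_ne_top).1 h

end GreenSet

lemma Nat.sInf_eq_sInf_iff {s t : Set ℕ} (hs : s.Nonempty) (ht : t.Nonempty) :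
    sInf s = sInf t ↔ ∃ n, (∀ k < n, k ∉ s ∪ t) ∧ n ∈ s ∩ t := by
  constructor
  · intro h
    refine ⟨sInf s, fun k hk hkst => ?_, Nat.sInf_mem hs, h ▸ Nat.sInf_mem ht⟩
    rcases hkst with hks | hkt
    · exact Nat.notMem_of_lt_sInf hk hks
    · exact Nat.notMem_of_lt_sInf (h ▸ hk) hkt
  · rintro ⟨n, hlt, hns, hnt⟩
    have hleast : ∀ u : Set ℕ, u ⊆ s ∪ t → n ∈ u → sInf u = n := fun u hu hn =>
      IsLeast.csInf_eq ⟨hn, fun k hk => not_lt.1 fun hkn => hlt k hkn (hu hk)⟩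
    rw [hleast s subset_union_left hns, hleast t subset_union_right hnt]

namespace ProbabilityTheory

variable {Ω α : Type*} [MeasurableSpace Ω] [MeasurableSpace α] {μ : Measure Ω}
  {X : ℕ → Ω → α} {ν : Measure α}

lemma iIndepFun.measure_forall_lt_mem_and_mem (hind : iIndepFun X μ)
    (hX : ∀ n, Measurable (X n)) (hlaw : ∀ n, μ.map (X n) = ν) {S T : Set α}
    (hS : MeasurableSet S) (hT : MeasurableSet T) (n : ℕ) :
    μ {ω | (∀ k < n, X k ω ∈ S) ∧ X n ω ∈ T} = ν S ^ n * ν T := by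
  have hpre : ∀ k {C : Set α}, MeasurableSet C → μ (X k ⁻¹' C) = ν C := fun k C hC => by
    rw [← hlaw k, Measure.map_apply (hX k) hC]
  have hset : {ω | (∀ k < n, X k ω ∈ S) ∧ X n ω ∈ T}
      = ⋂ k ∈ Finset.range (n + 1), X k ⁻¹' Function.update (fun _ => S) n T k := by
    ext ω
    simp only [mem_ofPred_eq, mem_iInter, Finset.mem_range, mem_preimage, Nat.lt_succ_iff_lt_or_eq]
    constructor
    · rintro ⟨hkS, hnT⟩ k (hk | rfl)
      · rw [Function.update_of_ne hk.ne]
        exact hkS k hk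
      · rwa [Function.update_self]
    · intro h
      exact ⟨fun k hk => by simpa [hk.ne] using h k (.inl hk), by simpa using h n (.inr rfl)⟩
  have hprefix : ∀ k ∈ Finset.range n, μ (X k ⁻¹' Function.update (fun _ => S) n T k) = ν S :=
    fun k hk => by rw [Function.update_of_ne (Finset.mem_range.1 hk).ne, hpre k hS]
  rw [hset, hind.measure_inter_preimage_eq_mul _ fun k _ => ?_, Finset.prod_range_succ,
    Finset.prod_congr rfl hprefix, Finset.prod_const, Finset.card_range, Function.update_self,
    hpre n hT]
  by_cases hk : k = n
  · subst hk; rwa [Function.update_self]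
  · rwa [Function.update_of_ne hk]

variable [IsProbabilityMeasure μ]

lemma iIndepFun.ae_exists_mem (hind : iIndepFun X μ) (hX : ∀ n, Measurable (X n))
    (hlaw : ∀ n, μ.map (X n) = ν) {C : Set α} (hC : MeasurableSet C) (hC0 : ν C ≠ 0) :
    ∀ᵐ ω ∂μ, ∃ n, X n ω ∈ C := by
  have : IsProbabilityMeasure ν := hlaw 0 ▸ Measure.isProbabilityMeasure_map (hX 0).aemeasurable
  have hlt : ν Cᶜ < 1 := by
    rw [prob_compl_eq_one_sub hC]
    exact ENNReal.sub_lt_self ENNReal.one_ne_top one_ne_zero hC0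
  rw [ae_iff]
  push Not
  refine le_zero_iff.1 (ge_of_tendsto' (ENNReal.tendsto_pow_atTop_nhds_zero_of_lt_one hlt)
    fun K => ?_)
  calc μ {ω | ∀ n, X n ω ∉ C}
      ≤ μ {ω | (∀ k < K, X k ω ∈ Cᶜ) ∧ X K ω ∈ univ} :=
        measure_mono fun ω h => ⟨fun k _ => h k, trivial⟩
    _ = ν Cᶜ ^ K := by
        rw [hind.measure_forall_lt_mem_and_mem hX hlaw hC.compl MeasurableSet.univ, measure_univ,
          mul_one]

theorem iIndepFun.measure_sInf_eq_sInf (hind : iIndepFun X μ) (hX : ∀ n, Measurable (X n))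
    (hlaw : ∀ n, μ.map (X n) = ν) {A B : Set α} (hA : MeasurableSet A) (hB : MeasurableSet B)
    (hA0 : ν A ≠ 0) (hB0 : ν B ≠ 0) :
    μ {ω | sInf {n | X n ω ∈ A} = sInf {n | X n ω ∈ B}} = ν (A ∩ B) / ν (A ∪ B) := by
  have : IsProbabilityMeasure ν := hlaw 0 ▸ Measure.isProbabilityMeasure_map (hX 0).aemeasurable
  set G : ℕ → Set Ω := fun n => {ω | (∀ k < n, X k ω ∈ (A ∪ B)ᶜ) ∧ X n ω ∈ A ∩ B}
  have hE : {ω | sInf {n | X n ω ∈ A} = sInf {n | X n ω ∈ B}} =ᵐ[μ] ⋃ n, G n := by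
    filter_upwards [hind.ae_exists_mem hX hlaw hA hA0, hind.ae_exists_mem hX hlaw hB hB0]
      with ω hωA hωB
    change _ = (ω ∈ ⋃ n, G n)
    rw [mem_iUnion]
    exact propext (Nat.sInf_eq_sInf_iff hωA hωB)
  have hGmeas : ∀ n, MeasurableSet (G n) := by
    intro n
    measurability
  have hGdisj : Pairwise (Function.onFun Disjoint G) := by
    refine (pairwise_disjoint_on G).2 fun n n' hlt => disjoint_left.2 fun ω hω hω' => ?_
    exact hω'.1 n hlt (subset_union_left (s := A) hω.2.1)
  rw [measure_congr hE, measure_iUnion hGdisj hGmeas]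
  simp only [G, hind.measure_forall_lt_mem_and_mem hX hlaw (hA.union hB).compl (hA.inter hB)]
  rw [ENNReal.tsum_mul_right, ENNReal.tsum_geometric, prob_compl_eq_one_sub (hA.union hB),
    ENNReal.sub_sub_cancel ENNReal.one_ne_top prob_le_one, div_eq_mul_inv, mul_comm]

end ProbabilityTheory

theorem stmt_4_general {Ω : Type*} [MeasureSpace Ω] [IsProbabilityMeasure (ℙ : Measure Ω)]
    (D : ℕ) (m x y : Fin D → ℝ)
    (M : Fin (D + 1) → ℝ) (hM0 : M 0 = 0)
    (hMsucc : ∀ i : Fin D, M i.succ = M i.castSucc + m i)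
    (hx0 : ∀ i, 0 ≤ x i) (hy0 : ∀ i, 0 ≤ y i)
    (hxm : ∀ i, x i ≤ m i) (hym : ∀ i, y i ≤ m i)
    (hxpos : 0 < ∑ i, x i) (hypos : 0 < ∑ i, y i)
    (r : ℕ → Ω → ℝ)
    (hrmeas : ∀ n, Measurable (r n))
    (hrunif : ∀ n, Measure.map (r n) ℙ
      = (ENNReal.ofReal (M (Fin.last D)))⁻¹ • volume.restrict (Icc (0 : ℝ) (M (Fin.last D))))
    (hindep : ProbabilityTheory.iIndepFun r ℙ) :
    ℙ {ω | sInf {n | r n ω ∈ ⋃ i : Fin D, Icc (M i.castSucc) (M i.castSucc + x i)}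
          = sInf {n | r n ω ∈ ⋃ i : Fin D, Icc (M i.castSucc) (M i.castSucc + y i)}}
      = ENNReal.ofReal ((∑ i, min (x i) (y i)) / (∑ i, max (x i) (y i))) := by
  set T := M (Fin.last D)
  have hxM : ∀ i, M i.castSucc + x i ≤ M i.succ := fun i => by rw [hMsucc]; linarith [hxm i]
  have hyM : ∀ i, M i.castSucc + y i ≤ M i.succ := fun i => by rw [hMsucc]; linarith [hym i]
  have hAsub : greenSet M x ⊆ Icc 0 T := hM0 ▸ greenSet_subset_Icc hx0 hxM
  have hBsub : greenSet M y ⊆ Icc 0 T := hM0 ▸ greenSet_subset_Icc hy0 hyM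
  have hT : ENNReal.ofReal T ≠ 0 := by
    refine (ENNReal.ofReal_pos.2 hxpos).trans_le ?_ |>.ne'
    simpa [volume_greenSet hx0 hxM] using measure_mono (μ := volume) hAsub
  have hν : ∀ S ⊆ Icc 0 T, ((ENNReal.ofReal T)⁻¹ • volume.restrict (Icc 0 T)) S
      = (ENNReal.ofReal T)⁻¹ * volume S := fun S hS => by
    rw [Measure.smul_apply, smul_eq_mul, Measure.restrict_apply' measurableSet_Icc,
      inter_eq_self_of_subset_left hS]
  have hν0 : ∀ {z}, (∀ i, 0 ≤ z i) → (∀ i, M i.castSucc + z i ≤ M i.succ) → 0 < ∑ i, z i →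
      (ENNReal.ofReal T)⁻¹ * volume (greenSet M z) ≠ 0 := fun hz0 hzM hzpos => by
    simp [volume_greenSet hz0 hzM, hzpos]
  change ℙ {ω | sInf {n | r n ω ∈ greenSet M x} = sInf {n | r n ω ∈ greenSet M y}} = _
  rw [hindep.measure_sInf_eq_sInf hrmeas hrunif (measurableSet_greenSet M x)
      (measurableSet_greenSet M y) (by rw [hν _ hAsub]; exact hν0 hx0 hxM hxpos)
      (by rw [hν _ hBsub]; exact hν0 hy0 hyM hypos),
    hν _ (inter_subset_left.trans hAsub), hν _ (union_subset hAsub hBsub),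
    ENNReal.mul_div_mul_left _ _ (by simp) (by simpa using hT),
    volume_greenSet_inter hx0 hxM hyM hy0, volume_greenSet_union hx0 hxM hyM,
    ENNReal.ofReal_div_of_pos (hxpos.trans_le (Finset.sum_le_sum fun i _ => le_max_left _ _))]

theorem stmt_4 {Ω : Type*} [MeasureSpace Ω] [IsProbabilityMeasure (ℙ : Measure Ω)]
    (D : ℕ) (m x y : Fin D → ℝ) (hm : ∀ i, 0 < m i)
    (M : Fin (D + 1) → ℝ) (hM0 : M 0 = 0)
    (hMsucc : ∀ i : Fin D, M i.succ = M i.castSucc + m i)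
    (hx0 : ∀ i, 0 ≤ x i) (hy0 : ∀ i, 0 ≤ y i)
    (hxm : ∀ i, x i ≤ m i) (hym : ∀ i, y i ≤ m i)
    (hxpos : 0 < ∑ i, x i) (hypos : 0 < ∑ i, y i)
    (r : ℕ → Ω → ℝ)
    (hrmeas : ∀ n, Measurable (r n))
    (hrunif : ∀ n, Measure.map (r n) ℙ
      = (ENNReal.ofReal (M (Fin.last D)))⁻¹ • volume.restrict (Icc (0 : ℝ) (M (Fin.last D))))
    (hindep : ProbabilityTheory.iIndepFun r ℙ) :
    ℙ {ω | sInf {n | r n ω ∈ ⋃ i : Fin D, Icc (M i.castSucc) (M i.castSucc + x i)}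
          = sInf {n | r n ω ∈ ⋃ i : Fin D, Icc (M i.castSucc) (M i.castSucc + y i)}}
      = ENNReal.ofReal ((∑ i, min (x i) (y i)) / (∑ i, max (x i) (y i))) :=
  stmt_4_general D m x y M hM0 hMsucc hx0 hy0 hxm hym hxpos hypos r hrmeas hrunif hindep
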